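/- Every commutative post-Lie superalgebra structure ∘ on the super Virasoro algebra SVir is trivial, i.e. x ∘ y = 0 for all x, y ∈ SVir. -/

import Mathlib

/-!
Let `D = L₀ ∘ ·`. By the second post-Lie identity `D` is a derivation of SVir, and together with
commutativity the same identity for `y = L₀` reads `(deg i - deg k) (e_j ∘ e_k)_i = [D e_j, e_k]_i`
in coordinates. The case `k = i = L₁` (resp. `G₁`) shows that no `D e_j` has an `L₀`- or
`G₀`-component, and then the case `e_j = L₀` shows that `D L₀` is a multiple of the central
element, so `D` preserves degrees. The derivation property on `[L_m, G₀]`, `[L_m, G₋ₘ]`,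
`[L₁, L₋₁]`, `[L₂, L₋₂]`, `[L₁, G₋₁]`, together with commutativity of `L_n ∘ L_m`, kills the
remaining coefficients, so `D = 0`. The first post-Lie identity with `x = L₀` then gives
`deg e_j • (e_j ∘ e_k) = 0`, and the degree-zero elements `G₀` and `C` are reached through
`[L₁, G₋₁] = (3/2) G₀` and `[L₂, L₋₂] = 4 L₀ + C/2`.
-/

theorem Module.Basis.repr_apply_eq_mul_repr {ι κ R M N : Type*} [CommSemiring R]
    [AddCommMonoid M] [Module R M] [AddCommMonoid N] [Module R N] [DecidableEq ι]
    (b : Module.Basis ι R M) (b' : Module.Basis κ R N) (f : M →ₗ[R] N) {i : κ} {j : ι} {c : R}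
    (h : ∀ k, b'.repr (f (b k)) i = if k = j then c else 0) (v : M) :
    b'.repr (f v) i = c * b.repr v j := by
  have : b'.coord i ∘ₗ f = c • b.coord j := b.ext fun k => by
    simp [h, Finsupp.single_apply, eq_comm]
  simpa [mul_comm] using LinearMap.congr_fun this v

inductive SVirIndex
  | L (m : ℤ)
  | C
  | G (r : ℤ)
  deriving DecidableEq

namespace SVirIndex

def deg : SVirIndex → ℤ
  | L m => m
  | C => 0
  | G r => r

def parity : SVirIndex → ZMod 2
  | G _ => 1
  | _ => 0

@[simp] theorem deg_L (m : ℤ) : (L m).deg = m := rfl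
@[simp] theorem deg_C : C.deg = 0 := rfl
@[simp] theorem deg_G (r : ℤ) : (G r).deg = r := rfl
@[simp] theorem parity_L (m : ℤ) : (L m).parity = 0 := rfl
@[simp] theorem parity_C : C.parity = 0 := rfl
@[simp] theorem parity_G (r : ℤ) : (G r).parity = 1 := rfl

def equivSum : SVirIndex ≃ (ℤ ⊕ Unit) ⊕ ℤ where
  toFun
    | L m => .inl (.inl m)
    | C => .inl (.inr ())
    | G r => .inr r
  invFun
    | .inl (.inl m) => L m
    | .inl (.inr ()) => C
    | .inr r => G r
  left_inv := by rintro (_ | _ | _) <;> rfl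
  right_inv := by rintro ((_ | _) | _) <;> rfl

end SVirIndex

def superSign (p : ZMod 2) : ℂ := if p = 1 then -1 else 1

@[simp] theorem superSign_zero : superSign 0 = 1 := rfl

open SVirIndex Module

section

variable {V : Type*} [AddCommGroup V] [Module ℂ V]

structure IsSVirBracket (b : Basis SVirIndex ℂ V) (br : V →ₗ[ℂ] V →ₗ[ℂ] V) : Prop where
  skew : ∀ j k, br (b j) (b k) = (-superSign (j.parity * k.parity)) • br (b k) (b j)
  L_L : ∀ m n : ℤ, br (b (L m)) (b (L n)) = ((m : ℂ) - n) • b (L (m + n)) +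
    (if m + n = 0 then ((m : ℂ) ^ 3 - m) / 12 else 0) • b C
  L_G : ∀ m r : ℤ, br (b (L m)) (b (G r)) = ((m : ℂ) / 2 - r) • b (G (m + r))
  G_G : ∀ r s : ℤ, br (b (G r)) (b (G s)) = (2 : ℂ) • b (L (r + s)) +
    (if r + s = 0 then ((r : ℂ) ^ 2 - 1 / 4) / 3 else 0) • b C
  L_C : ∀ m : ℤ, br (b (L m)) (b C) = 0
  G_C : ∀ r : ℤ, br (b (G r)) (b C) = 0

namespace IsSVirBracket

variable {b : Basis SVirIndex ℂ V} {br : V →ₗ[ℂ] V →ₗ[ℂ] V} (hbr : IsSVirBracket b br)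
include hbr

theorem C_C : br (b C) (b C) = 0 := by
  have h := hbr.skew C C
  simp only [parity_C, mul_zero, superSign_zero, neg_smul, one_smul] at h
  have h2 : (2 : ℂ) • br (b C) (b C) = 0 := by rw [two_smul]; nth_rw 1 [h]; exact neg_add_cancel _
  exact (smul_eq_zero.mp h2).resolve_left two_ne_zero

theorem br_C_left (v : V) : br (b C) v = 0 := by
  suffices br (b C) = 0 from this ▸ rfl
  refine b.ext fun k => ?_
  cases k with
  | C => exact hbr.C_C
  | _ => rw [hbr.skew]; simp [hbr.L_C, hbr.G_C]

theorem G_L (r m : ℤ) : br (b (G r)) (b (L m)) = ((r : ℂ) - m / 2) • b (G (r + m)) := by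
  rw [hbr.skew, hbr.L_G, smul_smul, add_comm m]
  simp only [parity_G, parity_L, mul_zero, superSign_zero]
  congr 1; ring

theorem br_L_left_eq_neg (m : ℤ) (w : V) : br (b (L m)) w = -br w (b (L m)) := by
  suffices br (b (L m)) = -br.flip (b (L m)) from LinearMap.congr_fun this w
  refine b.ext fun k => ?_
  simp [hbr.skew (L m) k]

theorem br_L_zero_left (k : SVirIndex) : br (b (L 0)) (b k) = (-(k.deg : ℂ)) • b k := by
  cases k <;> simp [hbr.L_L, hbr.L_G, hbr.L_C]

theorem repr_br_L_zero_left (v : V) (i : SVirIndex) :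
    b.repr (br (b (L 0)) v) i = -(i.deg : ℂ) * b.repr v i :=
  b.repr_apply_eq_mul_repr b (br (b (L 0))) (fun k => by
    simp only [hbr.br_L_zero_left, map_smul, Finsupp.smul_apply, b.repr_self_apply, smul_eq_mul]
    split_ifs <;> simp_all) v

theorem repr_br_L_at_L (t m : ℤ) (v : V) :
    b.repr (br v (b (L m))) (L t) = ((t : ℂ) - 2 * m) * b.repr v (L (t - m)) :=
  b.repr_apply_eq_mul_repr b (br.flip (b (L m))) (fun k => by
    cases k <;> simp [hbr.L_L, hbr.G_L, hbr.br_C_left, Finsupp.single_apply, -ite_smul,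
      eq_sub_iff_add_eq]
    split_ifs with h
    · subst h; push_cast; ring
    · rw [sub_self]) v

theorem repr_br_L_at_G (t m : ℤ) (v : V) :
    b.repr (br v (b (L m))) (G t) = ((t : ℂ) - 3 * m / 2) * b.repr v (G (t - m)) :=
  b.repr_apply_eq_mul_repr b (br.flip (b (L m))) (fun k => by
    cases k <;> simp [hbr.L_L, hbr.G_L, hbr.br_C_left, Finsupp.single_apply, -ite_smul,
      eq_sub_iff_add_eq]
    split_ifs with h
    · subst h; push_cast; ring
    · rw [sub_self]) v

theorem repr_br_L_at_C (m : ℤ) (v : V) :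
    b.repr (br v (b (L m))) C = (((m : ℂ) - m ^ 3) / 12) * b.repr v (L (-m)) :=
  b.repr_apply_eq_mul_repr b (br.flip (b (L m))) (fun k => by
    cases k <;> simp [hbr.L_L, hbr.G_L, hbr.br_C_left, -ite_smul, eq_neg_iff_add_eq_zero]
    split_ifs with h
    · obtain rfl := eq_neg_of_add_eq_zero_left h; push_cast; ring
    · rfl) v

theorem repr_br_G_at_L (t m : ℤ) (v : V) :
    b.repr (br v (b (G m))) (L t) = 2 * b.repr v (G (t - m)) :=
  b.repr_apply_eq_mul_repr b (br.flip (b (G m))) (fun k => by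
    cases k <;> simp [hbr.L_G, hbr.G_G, hbr.br_C_left, Finsupp.single_apply, -ite_smul,
      eq_sub_iff_add_eq]) v

theorem repr_br_G_at_G (t m : ℤ) (v : V) :
    b.repr (br v (b (G m))) (G t) = (((t : ℂ) - m) / 2 - m) * b.repr v (L (t - m)) :=
  b.repr_apply_eq_mul_repr b (br.flip (b (G m))) (fun k => by
    cases k <;> simp [hbr.L_G, hbr.G_G, hbr.br_C_left, Finsupp.single_apply, -ite_smul,
      eq_sub_iff_add_eq]
    split_ifs with h
    · subst h; push_cast; ring
    · rw [sub_self]) v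

theorem repr_br_G_at_C (m : ℤ) (v : V) :
    b.repr (br v (b (G m))) C = (((m : ℂ) ^ 2 - 1 / 4) / 3) * b.repr v (G (-m)) :=
  b.repr_apply_eq_mul_repr b (br.flip (b (G m))) (fun k => by
    cases k <;> simp [hbr.L_G, hbr.G_G, hbr.br_C_left, -ite_smul, eq_neg_iff_add_eq_zero]
    split_ifs with h
    · obtain rfl := eq_neg_of_add_eq_zero_left h; push_cast; ring
    · rfl) v

end IsSVirBracket

/-- Basis vectors are homogeneous, so by bilinearity these are the defining identities. -/
structure IsCommPostLie (b : Basis SVirIndex ℂ V) (br circ : V →ₗ[ℂ] V →ₗ[ℂ] V) : Prop where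
  comm : ∀ j k, circ (b j) (b k) = superSign (j.parity * k.parity) • circ (b k) (b j)
  br_left : ∀ j k l, circ (br (b j) (b k)) (b l) =
    circ (b j) (circ (b k) (b l)) - superSign (j.parity * k.parity) • circ (b k) (circ (b j) (b l))
  br_right : ∀ j k l, circ (b j) (br (b k) (b l)) =
    br (circ (b j) (b k)) (b l) + superSign (j.parity * k.parity) • br (b k) (circ (b j) (b l))

namespace IsCommPostLie

variable {b : Basis SVirIndex ℂ V} {br circ : V →ₗ[ℂ] V →ₗ[ℂ] V}
  (hbr : IsSVirBracket b br) (hpl : IsCommPostLie b br circ)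
include hpl

theorem circ_L_zero_br (k l : SVirIndex) : circ (b (L 0)) (br (b k) (b l)) =
    br (circ (b (L 0)) (b k)) (b l) + br (b k) (circ (b (L 0)) (b l)) := by
  simpa using hpl.br_right (L 0) k l

include hbr

theorem deg_sub_mul_repr_circ (j k i : SVirIndex) :
    ((i.deg : ℂ) - k.deg) * b.repr (circ (b j) (b k)) i =
      b.repr (br (circ (b (L 0)) (b j)) (b k)) i := by
  have h := congrArg (b.repr · i) (hpl.br_right j (L 0) k)
  simp only [hbr.br_L_zero_left, hpl.comm j (L 0), parity_L, mul_zero, superSign_zero, one_smul,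
    map_smul, map_add, Finsupp.add_apply, Finsupp.smul_apply, smul_eq_mul,
    hbr.repr_br_L_zero_left] at h
  linear_combination h

theorem repr_circ_L_zero_at_L_zero (j : SVirIndex) :
    b.repr (circ (b (L 0)) (b j)) (L 0) = 0 := by
  have h := hpl.deg_sub_mul_repr_circ hbr j (L 1) (L 1)
  rw [sub_self, zero_mul, hbr.repr_br_L_at_L, sub_self] at h
  exact (mul_eq_zero.mp h.symm).resolve_left (by norm_num)

theorem repr_circ_L_zero_at_G_zero (j : SVirIndex) :
    b.repr (circ (b (L 0)) (b j)) (G 0) = 0 := by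
  have h := hpl.deg_sub_mul_repr_circ hbr j (L 1) (G 1)
  rw [deg_G, deg_L, sub_self, zero_mul, hbr.repr_br_L_at_G, sub_self] at h
  exact (mul_eq_zero.mp h.symm).resolve_left (by norm_num)

theorem repr_circ_L_zero_L_zero_at_L (s : ℤ) :
    b.repr (circ (b (L 0)) (b (L 0))) (L s) = 0 := by
  rcases eq_or_ne s 0 with rfl | hs
  · exact hpl.repr_circ_L_zero_at_L_zero hbr (L 0)
  have h := hpl.deg_sub_mul_repr_circ hbr (L 0) (L (-s)) (L 0)
  rw [hpl.repr_circ_L_zero_at_L_zero hbr, hbr.repr_br_L_at_L] at h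
  simpa [hs] using h

theorem repr_circ_L_zero_L_zero_at_G (s : ℤ) :
    b.repr (circ (b (L 0)) (b (L 0))) (G s) = 0 := by
  rcases eq_or_ne s 0 with rfl | hs
  · exact hpl.repr_circ_L_zero_at_G_zero hbr (L 0)
  have h := hpl.deg_sub_mul_repr_circ hbr (L 0) (L (-s)) (G 0)
  rw [hpl.repr_circ_L_zero_at_G_zero hbr, hbr.repr_br_L_at_G] at h
  simpa [hs] using h

theorem br_circ_L_zero_L_zero_left (w : V) : br (circ (b (L 0)) (b (L 0))) w = 0 := by
  have hC : circ (b (L 0)) (b (L 0)) = b.repr (circ (b (L 0)) (b (L 0))) C • b C :=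
    b.ext_elem fun i => by
      cases i <;> simp [hpl.repr_circ_L_zero_L_zero_at_L hbr, hpl.repr_circ_L_zero_L_zero_at_G hbr]
  rw [hC, map_smul, LinearMap.smul_apply, hbr.br_C_left, smul_zero]

theorem repr_circ_L_zero_of_deg_ne {k i : SVirIndex} (h : i.deg ≠ k.deg) :
    b.repr (circ (b (L 0)) (b k)) i = 0 := by
  have hki := hpl.deg_sub_mul_repr_circ hbr (L 0) k i
  rw [hpl.br_circ_L_zero_L_zero_left hbr, map_zero, Finsupp.zero_apply] at hki
  exact (mul_eq_zero.mp hki).resolve_left (sub_ne_zero.mpr (by exact_mod_cast h))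

theorem repr_circ_L_zero_br_L_left (m : ℤ) (l i : SVirIndex) :
    b.repr (circ (b (L 0)) (br (b (L m)) (b l))) i =
      b.repr (br (circ (b (L 0)) (b (L m))) (b l)) i -
        b.repr (br (circ (b (L 0)) (b l)) (b (L m))) i := by
  rw [hpl.circ_L_zero_br, hbr.br_L_left_eq_neg m (circ (b (L 0)) (b l)), map_add, map_neg,
    Finsupp.add_apply, Finsupp.neg_apply, sub_eq_add_neg]

theorem half_mul_repr_circ_L_zero_G_at_L (m : ℤ) :
    (m : ℂ) / 2 * b.repr (circ (b (L 0)) (b (G m))) (L m) =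
      2 * b.repr (circ (b (L 0)) (b (L m))) (G m) := by
  have h := hpl.repr_circ_L_zero_br_L_left hbr m (G 0) (L m)
  simp only [hbr.L_G, Int.cast_zero, sub_zero, add_zero, map_smul, Finsupp.smul_apply, smul_eq_mul,
    hbr.repr_br_G_at_L, hbr.repr_br_L_at_L, sub_self, hpl.repr_circ_L_zero_at_L_zero hbr,
    mul_zero] at h
  linear_combination h

theorem repr_circ_L_zero_L_at_G_eq_neg (m : ℤ) :
    b.repr (circ (b (L 0)) (b (L m))) (G m) =
      -(m * b.repr (circ (b (L 0)) (b (G (-m)))) (L (-m))) := by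
  have h := hpl.repr_circ_L_zero_br_L_left hbr m (G (-m)) (L 0)
  simp only [hbr.L_G, Int.cast_neg, sub_neg_eq_add, add_neg_cancel, map_smul, Finsupp.smul_apply,
    hpl.repr_circ_L_zero_at_L_zero hbr, smul_eq_mul, mul_zero, hbr.repr_br_G_at_L, zero_add,
    hbr.repr_br_L_at_L, Int.cast_zero, zero_sub, neg_mul] at h
  linear_combination -h / 2

theorem repr_circ_L_zero_L_at_G (m : ℤ) : b.repr (circ (b (L 0)) (b (L m))) (G m) = 0 := by
  -- with `β m` this coordinate, the four relations give `β m = 4 β (-m)` and `β (-m) = 4 β m`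
  have e1 := hpl.half_mul_repr_circ_L_zero_G_at_L hbr m
  have e2 := hpl.half_mul_repr_circ_L_zero_G_at_L hbr (-m)
  have e3 := hpl.repr_circ_L_zero_L_at_G_eq_neg hbr m
  have e4 := hpl.repr_circ_L_zero_L_at_G_eq_neg hbr (-m)
  push_cast [neg_neg] at e2 e4
  linear_combination (-8 / 15 : ℂ) * e1 - 2 / 15 * e2 - 1 / 15 * e3 - 4 / 15 * e4

theorem repr_circ_L_zero_G_at_L (m : ℤ) : b.repr (circ (b (L 0)) (b (G m))) (L m) = 0 := by
  rcases eq_or_ne m 0 with rfl | hm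
  · exact hpl.repr_circ_L_zero_at_L_zero hbr (G 0)
  have h := hpl.half_mul_repr_circ_L_zero_G_at_L hbr m
  simpa [hpl.repr_circ_L_zero_L_at_G hbr, hm] using h

theorem mul_repr_circ_L_zero_L_at_L (n m : ℤ) :
    (m : ℂ) * (n - m) * b.repr (circ (b (L 0)) (b (L n))) (L n) =
      n * (m - n) * b.repr (circ (b (L 0)) (b (L m))) (L m) := by
  have hP := hpl.deg_sub_mul_repr_circ hbr (L n) (L m) (L (n + m))
  have hQ := hpl.deg_sub_mul_repr_circ hbr (L m) (L n) (L (n + m))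
  rw [hbr.repr_br_L_at_L, add_sub_cancel_right] at hP
  rw [hbr.repr_br_L_at_L, add_sub_cancel_left, hpl.comm (L m) (L n)] at hQ
  simp only [deg_L, parity_L, mul_zero, superSign_zero, one_smul, Int.cast_add] at hP hQ
  linear_combination (n : ℂ) * hQ - m * hP

theorem repr_circ_L_zero_L_at_L (n : ℤ) : b.repr (circ (b (L 0)) (b (L n))) (L n) = 0 := by
  have h1 : b.repr (circ (b (L 0)) (b (L 1))) (L 1) = 0 := by
    have e12 := hpl.mul_repr_circ_L_zero_L_at_L hbr 1 2
    have e13 := hpl.mul_repr_circ_L_zero_L_at_L hbr 1 3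
    have e23 := hpl.mul_repr_circ_L_zero_L_at_L hbr 2 3
    push_cast at e12 e13 e23
    linear_combination (-1 / 4 : ℂ) * e12 - 1 / 12 * e13 + 1 / 12 * e23
  rcases eq_or_ne n 1 with rfl | hn
  · exact h1
  have h := hpl.mul_repr_circ_L_zero_L_at_L hbr n 1
  simpa [h1, sub_eq_zero, hn] using h

theorem repr_circ_L_zero_G_at_G (m : ℤ) : b.repr (circ (b (L 0)) (b (G m))) (G m) = 0 := by
  rcases eq_or_ne m 0 with rfl | hm
  · exact hpl.repr_circ_L_zero_at_G_zero hbr (G 0)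
  have h := hpl.repr_circ_L_zero_br_L_left hbr m (G 0) (G m)
  simpa [hbr.L_G, hbr.repr_br_G_at_G, hbr.repr_br_L_at_G, hpl.repr_circ_L_zero_at_G_zero hbr,
    hpl.repr_circ_L_zero_L_at_L hbr, hm] using h

theorem repr_circ_L_zero_L_zero_at_C : b.repr (circ (b (L 0)) (b (L 0))) C = 0 := by
  have h := hpl.repr_circ_L_zero_br_L_left hbr 1 (L (-1)) C
  norm_num [hbr.L_L, hbr.repr_br_L_at_C] at h
  exact h

theorem repr_circ_L_zero_C_at_C : b.repr (circ (b (L 0)) (b C)) C = 0 := by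
  have h := hpl.repr_circ_L_zero_br_L_left hbr 2 (L (-2)) C
  norm_num [hbr.L_L, hbr.repr_br_L_at_C, hpl.repr_circ_L_zero_L_zero_at_C hbr,
    hpl.repr_circ_L_zero_L_at_L hbr] at h
  exact h

theorem repr_circ_L_zero_G_zero_at_C : b.repr (circ (b (L 0)) (b (G 0))) C = 0 := by
  have h := hpl.repr_circ_L_zero_br_L_left hbr 1 (G (-1)) C
  norm_num [hbr.L_G, hbr.repr_br_G_at_C, hbr.repr_br_L_at_C, hpl.repr_circ_L_zero_L_at_G hbr] at h
  exact h

theorem circ_L_zero_eq_zero : circ (b (L 0)) = 0 := by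
  refine b.ext fun k => b.ext_elem fun i => ?_
  rw [LinearMap.zero_apply, map_zero, Finsupp.zero_apply]
  by_cases h : i.deg = k.deg
  swap
  · exact hpl.repr_circ_L_zero_of_deg_ne hbr h
  cases k <;> cases i <;> simp only [deg_L, deg_C, deg_G] at h <;> subst_vars
  exacts [hpl.repr_circ_L_zero_L_at_L hbr _, hpl.repr_circ_L_zero_L_zero_at_C hbr,
    hpl.repr_circ_L_zero_L_at_G hbr _, hpl.repr_circ_L_zero_at_L_zero hbr C,
    hpl.repr_circ_L_zero_C_at_C hbr, hpl.repr_circ_L_zero_at_G_zero hbr C,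
    hpl.repr_circ_L_zero_G_at_L hbr _, hpl.repr_circ_L_zero_G_zero_at_C hbr,
    hpl.repr_circ_L_zero_G_at_G hbr _]

theorem circ_eq_zero_of_deg_ne_zero {j : SVirIndex} (hj : j.deg ≠ 0) : circ (b j) = 0 := by
  refine b.ext fun k => ?_
  have h := hpl.br_left (L 0) j k
  simpa [hbr.br_L_zero_left, hpl.circ_L_zero_eq_zero hbr, hj] using h

theorem circ_G_zero_eq_zero : circ (b (G 0)) = 0 := by
  refine b.ext fun k => ?_
  have h := hpl.br_left (L 1) (G (-1)) k
  rw [hpl.circ_eq_zero_of_deg_ne_zero hbr (j := L 1) (by simp),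
    hpl.circ_eq_zero_of_deg_ne_zero hbr (j := G (-1)) (by simp), hbr.L_G] at h
  norm_num at h
  exact h

theorem circ_C_eq_zero : circ (b C) = 0 := by
  refine b.ext fun k => ?_
  have h := hpl.br_left (L 2) (L (-2)) k
  rw [hpl.circ_eq_zero_of_deg_ne_zero hbr (j := L 2) (by simp),
    hpl.circ_eq_zero_of_deg_ne_zero hbr (j := L (-2)) (by simp), hbr.L_L] at h
  norm_num [hpl.circ_L_zero_eq_zero hbr] at h
  exact h

theorem circ_eq_zero : circ = 0 := by
  refine b.ext fun j => ?_
  rw [LinearMap.zero_apply]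
  by_cases hj : j.deg = 0
  · cases j <;> simp only [deg_L, deg_C, deg_G] at hj <;> subst_vars
    exacts [hpl.circ_L_zero_eq_zero hbr, hpl.circ_C_eq_zero hbr, hpl.circ_G_zero_eq_zero hbr]
  · exact hpl.circ_eq_zero_of_deg_ne_zero hbr hj

end IsCommPostLie

end

theorem postLie_SVir_trivial
    (V : Type) [AddCommGroup V] [Module ℂ V]
    (bV : Module.Basis ((ℤ ⊕ Unit) ⊕ ℤ) ℂ V)
    (br : V →ₗ[ℂ] V →ₗ[ℂ] V)
    (L : ℤ → V) (Cc : V) (G : ℤ → V)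
    (hLdef : ∀ m : ℤ, L m = bV (Sum.inl (Sum.inl m)))
    (hCdef : Cc = bV (Sum.inl (Sum.inr ())))
    (hGdef : ∀ r : ℤ, G r = bV (Sum.inr r))
    (Vsub : ZMod 2 → Submodule ℂ V)
    (hV0 : Vsub 0 = Submodule.span ℂ (Set.range (fun i : ℤ ⊕ Unit => bV (Sum.inl i))))
    (hV1 : Vsub 1 = Submodule.span ℂ (Set.range (fun j : ℤ => bV (Sum.inr j))))
    (sgn : ZMod 2 → ℂ) (hsgn : ∀ p : ZMod 2, sgn p = if p = 1 then -1 else 1)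
    (hLL : ∀ m n : ℤ, br (L m) (L n) = ((m : ℂ) - n) • L (m + n) +
      (if m + n = 0 then ((m : ℂ) ^ 3 - m) / 12 else 0) • Cc)
    (hLG : ∀ m r : ℤ, br (L m) (G r) = ((m : ℂ) / 2 - r) • G (m + r))
    (hGG : ∀ r s : ℤ, br (G r) (G s) = (2 : ℂ) • L (r + s) +
      (if r + s = 0 then ((r : ℂ) ^ 2 - 1 / 4) / 3 else 0) • Cc)
    (hLC : ∀ m : ℤ, br (L m) Cc = 0)
    (hGC : ∀ r : ℤ, br (G r) Cc = 0)
    (hskew : ∀ p q : ZMod 2, ∀ x ∈ Vsub p, ∀ y ∈ Vsub q,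
      br x y = (-(sgn (p * q))) • br y x)
    (circ : V →ₗ[ℂ] V →ₗ[ℂ] V)
    (hcomm : ∀ p q : ZMod 2, ∀ x ∈ Vsub p, ∀ y ∈ Vsub q, circ x y = sgn (p * q) • circ y x)
    (hpost1 : ∀ p q t : ZMod 2, ∀ x ∈ Vsub p, ∀ y ∈ Vsub q, ∀ z ∈ Vsub t,
      circ (br x y) z = circ x (circ y z) - sgn (p * q) • circ y (circ x z))
    (hpost2 : ∀ p q t : ZMod 2, ∀ x ∈ Vsub p, ∀ y ∈ Vsub q, ∀ z ∈ Vsub t,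
      circ x (br y z) = br (circ x y) z + sgn (p * q) • br y (circ x z)) :
    ∀ x y : V, circ x y = 0 := by
  obtain rfl : sgn = superSign := funext hsgn
  let b := bV.reindex SVirIndex.equivSum.symm
  have hbL (m : ℤ) : b (.L m) = L m := by simp [b, hLdef, SVirIndex.equivSum]
  have hbC : b .C = Cc := by simp [b, hCdef, SVirIndex.equivSum]
  have hbG (r : ℤ) : b (.G r) = G r := by simp [b, hGdef, SVirIndex.equivSum]
  have mem (j : SVirIndex) : b j ∈ Vsub j.parity := by
    cases j
    · rw [hbL, hLdef, parity_L, hV0]; exact Submodule.subset_span ⟨_, rfl⟩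
    · rw [hbC, hCdef, parity_C, hV0]; exact Submodule.subset_span ⟨_, rfl⟩
    · rw [hbG, hGdef, parity_G, hV1]; exact Submodule.subset_span ⟨_, rfl⟩
  have hbr : IsSVirBracket b br :=
    { skew := fun j k => hskew _ _ _ (mem j) _ (mem k)
      L_L := by simpa only [hbL, hbC] using hLL
      L_G := by simpa only [hbL, hbG] using hLG
      G_G := by simpa only [hbL, hbG, hbC] using hGG
      L_C := by simpa only [hbL, hbC] using hLC
      G_C := by simpa only [hbG, hbC] using hGC }
  have hpl : IsCommPostLie b br circ :=
    { comm := fun j k => hcomm _ _ _ (mem j) _ (mem k)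
      br_left := fun j k l => hpost1 _ _ _ _ (mem j) _ (mem k) _ (mem l)
      br_right := fun j k l => hpost2 _ _ _ _ (mem j) _ (mem k) _ (mem l) }
  simp [hpl.circ_eq_zero hbr]
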